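/- Let q = −1 and let A be the ℂ-algebra T(V)#G localized to the setting of the motivational example with n = 2. Define a new multiplication on A[[t]] by a * b = ab + t·D₁(a)D₂(b) where D₁, D₂ are as in the motivational example. Then in the deformed algebra, w₁ * w₂ + w₂ * w₁ = −t w₃ σ₁, w₁ * w₃ + w₃ * w₁ = 0, and w₂ * w₃ − w₃ * w₂ = 0. -/

import Mathlib

/-- The underlying vector space of `S_q(V)#G` in the motivational example: it has basis
`{w₁ⁱ w₂ʲ w₃ᵐ g}` indexed by `(i,j,m) ∈ ℕ³` and `g = σ₁^a σ₂^b ∈ G = (ℤ/n)²`. -/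
abbrev SmashSpace (n : ℕ) := (ℕ × ℕ × ℕ × (ZMod n × ZMod n)) →₀ ℂ

/-- The quantum integer `(m)_q = 1 + q + ⋯ + q^(m−1)`. -/
noncomputable def qInt (q : ℂ) (m : ℕ) : ℂ := ∑ i ∈ Finset.range m, q ^ i

/-- The character `χ₁ : G → ℂˣ` evaluated at `g⁻¹`, for `g = σ₁^a σ₂^b`: since
`σ₁(w₁) = q w₁` and `σ₂(w₁) = w₁`, we have `χ₁(g) = q^a`, so `χ₁(g⁻¹) = q^((−a).val)`. -/
noncomputable def chi1inv (n : ℕ) (q : ℂ) (g : ZMod n × ZMod n) : ℂ := q ^ (-g.1).val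

/-- `D₁` on basis elements: `D₁(w₁ⁱw₂ʲw₃ᵐ g) = (i)_q q^(j+m) χ₁(g⁻¹) w₁^(i−1)w₂ʲw₃ᵐ σ₂ g`
(a negative exponent is interpreted as `0`; indeed `(0)_q = 0`). -/
noncomputable def D1fun (n : ℕ) (q : ℂ) :
    ℕ × ℕ × ℕ × (ZMod n × ZMod n) → SmashSpace n
  | (i, j, m, (a, b)) =>
      (qInt q i * q ^ (j + m) * chi1inv n q (a, b)) •
        Finsupp.single (i - 1, j, m, (a, b + 1)) 1

/-- `D₂` on basis elements: `D₂(w₁ⁱw₂ʲw₃ᵐ g) = (j)_{q⁻¹} qⁱ w₁ⁱw₂^(j−1)w₃^(m+1) σ₁σ₂⁻¹ g`. -/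
noncomputable def D2fun (n : ℕ) (q : ℂ) :
    ℕ × ℕ × ℕ × (ZMod n × ZMod n) → SmashSpace n
  | (i, j, m, (a, b)) =>
      (qInt q⁻¹ j * q ^ i) • Finsupp.single (i, j - 1, m + 1, (a + 1, b - 1)) 1

/-- `σ` on basis elements: `σ(w₁ⁱw₂ʲw₃ᵐ g) = qⁱ χ₁(g⁻¹) w₁ⁱw₂ʲw₃ᵐ g`. -/
noncomputable def sigmafun (n : ℕ) (q : ℂ) :
    ℕ × ℕ × ℕ × (ZMod n × ZMod n) → SmashSpace n
  | (i, j, m, (a, b)) =>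
      (q ^ i * chi1inv n q (a, b)) • Finsupp.single (i, j, m, (a, b)) 1

/-- The `ℂ`-linear extension of a map defined on the monomial basis. -/
noncomputable def extend (n : ℕ)
    (f : ℕ × ℕ × ℕ × (ZMod n × ZMod n) → SmashSpace n) :
    SmashSpace n →ₗ[ℂ] SmashSpace n :=
  Finsupp.lsum ℂ fun p => LinearMap.toSpanSingleton ℂ (SmashSpace n) (f p)

/-- The smash product multiplication on basis elements (see `mulfun` in the general case):
`(w₁ⁱw₂ʲw₃ᵐ # g)·(w₁^{i'}w₂^{j'}w₃^{m'} # g') = χ₁(g)^{i'}χ₂(g)^{j'}χ₃(g)^{m'} q^{-i'(j+m)}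
· w₁^{i+i'}w₂^{j+j'}w₃^{m+m'} # (gg')`. -/
noncomputable def mulfun (n : ℕ) (q : ℂ) :
    ℕ × ℕ × ℕ × (ZMod n × ZMod n) → ℕ × ℕ × ℕ × (ZMod n × ZMod n) → SmashSpace n
  | (i, j, m, (a, b)), (i', j', m', (a', b')) =>
      (q ^ (a.val * i' + b.val * j' + (a.val + b.val) * m') * q⁻¹ ^ (i' * (j + m))) •
        Finsupp.single (i + i', j + j', m + m', (a + a', b + b')) 1

/-- The bilinear extension of `mulfun`: the multiplication of `S_q(V)#G`. -/
noncomputable def smul2 (n : ℕ) (q : ℂ) :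
    SmashSpace n →ₗ[ℂ] SmashSpace n →ₗ[ℂ] SmashSpace n :=
  Finsupp.lsum ℂ fun p => LinearMap.toSpanSingleton ℂ (SmashSpace n →ₗ[ℂ] SmashSpace n)
    (Finsupp.lsum ℂ fun p' => LinearMap.toSpanSingleton ℂ (SmashSpace n) (mulfun n q p p'))

/-- The deformed multiplication `a * b = ab + t·D₁(a)D₂(b)`; an element of
`(S_q(V)#G)[[t]]` with polynomial coefficients is recorded as a finitely supported
function `ℕ →₀ S_q(V)#G` of the powers of `t`. -/
noncomputable def star (n : ℕ) (q : ℂ) (a b : SmashSpace n) : ℕ →₀ SmashSpace n :=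
  Finsupp.single 0 (smul2 n q a b) +
    Finsupp.single 1 (smul2 n q (extend n (D1fun n q) a) (extend n (D2fun n q) b))

/-!
`D₁` vanishes on `w₂, w₃` and `D₂` on `w₁, w₃`, so among the six products only `w₁ * w₂`
acquires a `t`-term, namely `D₁(w₁)D₂(w₂) = σ₂ · w₃σ₁σ₂⁻¹ = q w₃σ₁`. The `t⁰`-parts are the
`q`-commutation relations of `S_q(V)` between monomials with trivial group part, which at
`q = −1` read `w₂w₁ = −w₁w₂`, `w₃w₁ = −w₁w₃`, `w₃w₂ = w₂w₃`.
-/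

section BasisComputations

variable (n : ℕ) (q : ℂ)

lemma extend_single (f : ℕ × ℕ × ℕ × (ZMod n × ZMod n) → SmashSpace n)
    (p : ℕ × ℕ × ℕ × (ZMod n × ZMod n)) :
    extend n f (Finsupp.single p 1) = f p := by
  simp [extend]

lemma smul2_single (p p' : ℕ × ℕ × ℕ × (ZMod n × ZMod n)) :
    smul2 n q (Finsupp.single p 1) (Finsupp.single p' 1) = mulfun n q p p' := by
  simp [smul2]

lemma star_single (p p' : ℕ × ℕ × ℕ × (ZMod n × ZMod n)) :
    star n q (Finsupp.single p 1) (Finsupp.single p' 1) =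
      Finsupp.single 0 (mulfun n q p p') +
        Finsupp.single 1 (smul2 n q (D1fun n q p) (D2fun n q p')) := by
  rw [_root_.star, smul2_single, extend_single, extend_single]

lemma star_single_of_D1fun_eq_zero {p : ℕ × ℕ × ℕ × (ZMod n × ZMod n)}
    (hp : D1fun n q p = 0) (p' : ℕ × ℕ × ℕ × (ZMod n × ZMod n)) :
    star n q (Finsupp.single p 1) (Finsupp.single p' 1) = Finsupp.single 0 (mulfun n q p p') := by
  rw [star_single, hp, map_zero, LinearMap.zero_apply, Finsupp.single_zero]
  exact add_zero (Finsupp.single 0 (mulfun n q p p'))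

lemma star_single_of_D2fun_eq_zero (p : ℕ × ℕ × ℕ × (ZMod n × ZMod n))
    {p' : ℕ × ℕ × ℕ × (ZMod n × ZMod n)} (hp' : D2fun n q p' = 0) :
    star n q (Finsupp.single p 1) (Finsupp.single p' 1) = Finsupp.single 0 (mulfun n q p p') := by
  rw [star_single, hp', map_zero, Finsupp.single_zero]
  exact add_zero (Finsupp.single 0 (mulfun n q p p'))

lemma D1fun_of_fst_eq_zero (j m : ℕ) (g : ZMod n × ZMod n) : D1fun n q (0, j, m, g) = 0 := by
  simp [D1fun, qInt]

lemma D2fun_of_snd_eq_zero (i m : ℕ) (g : ZMod n × ZMod n) : D2fun n q (i, 0, m, g) = 0 := by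
  simp [D2fun, qInt]

lemma mulfun_of_group_eq_one (i j m i' j' m' : ℕ) :
    mulfun n q (i, j, m, (0, 0)) (i', j', m', (0, 0)) =
      q⁻¹ ^ (i' * (j + m)) • Finsupp.single (i + i', j + j', m + m', (0, 0)) 1 := by
  simp [mulfun]

lemma D1fun_w₁_mul_D2fun_w₂ [Fact (1 < n)] :
    smul2 n q (D1fun n q (1, 0, 0, (0, 0))) (D2fun n q (0, 1, 0, (0, 0))) =
      q • Finsupp.single (0, 0, 1, (1, 0)) 1 := by
  simp [D1fun, D2fun, qInt, chi1inv, smul2_single, mulfun, ZMod.val_one]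

end BasisComputations

/-- For `q = −1` (so `n = 2`) in the motivational example, the deformed
multiplication `a * b = ab + t·D₁(a)D₂(b)` satisfies `w₁*w₂ + w₂*w₁ = −t w₃σ₁`,
`w₁*w₃ + w₃*w₁ = 0`, and `w₂*w₃ − w₃*w₂ = 0`. -/
theorem motivational_deformed_relations :
    let q : ℂ := -1
    let w₁ : SmashSpace 2 := Finsupp.single (1, 0, 0, (0, 0)) 1
    let w₂ : SmashSpace 2 := Finsupp.single (0, 1, 0, (0, 0)) 1
    let w₃ : SmashSpace 2 := Finsupp.single (0, 0, 1, (0, 0)) 1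
    -- `w₃ σ₁` : the basis element `w₃ # σ₁`
    let w₃σ₁ : SmashSpace 2 := Finsupp.single (0, 0, 1, (1, 0)) 1
    star 2 q w₁ w₂ + star 2 q w₂ w₁ = Finsupp.single 1 (-w₃σ₁) ∧
    star 2 q w₁ w₃ + star 2 q w₃ w₁ = 0 ∧
    star 2 q w₂ w₃ - star 2 q w₃ w₂ = 0 := by
  dsimp only
  have hD1w₂ := D1fun_of_fst_eq_zero 2 (-1) 1 0 (0, 0)
  have hD1w₃ := D1fun_of_fst_eq_zero 2 (-1) 0 1 (0, 0)
  have hD2w₃ := D2fun_of_snd_eq_zero 2 (-1) 0 1 (0, 0)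
  rw [star_single 2 (-1) (1, 0, 0, (0, 0)) (0, 1, 0, (0, 0)), D1fun_w₁_mul_D2fun_w₂]
  simp only [star_single_of_D1fun_eq_zero _ _ hD1w₂, star_single_of_D1fun_eq_zero _ _ hD1w₃,
    star_single_of_D2fun_eq_zero _ _ _ hD2w₃, mulfun_of_group_eq_one, inv_neg, inv_one, add_zero,
    zero_add, mul_zero, mul_one, pow_zero, pow_one, one_smul, neg_smul, Finsupp.single_neg]
  exact ⟨by abel, by abel, by abel⟩
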